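/- Let G be a graph and let I, J be independent sets with |I| = |J| such that G[I △ J] contains no even cycles. Then there exists a TJ-sequence from I to J of length exactly |I \ J|. -/

import Mathlib

/-!
Since `I` and `J` are independent, `G[I △ J]` is bipartite with sides `I \ J` and `J \ I`; having
no even cycle, it is a forest. A forest has a vertex `x` of degree at most one. If `x ∈ J \ I`,
moving to `x` the token of its neighbour in `I \ J` (or of any vertex of `I \ J` if it has none)
keeps `I` independent and deletes two vertices from `I △ J`, which stays a forest; if
`x ∈ I \ J`, make the same move from `J` and traverse it backwards at the end. Induction on
`|I \ J| = |J \ I|` gives a walk of exactly that length in the token jumping graph.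
-/

open SimpleGraph

/-- A graph is claw-free if no vertex has three pairwise nonadjacent neighbors. -/
def ClawFree {V : Type} (G : SimpleGraph V) : Prop :=
  ¬ ∃ v a b c : V, G.Adj v a ∧ G.Adj v b ∧ G.Adj v c ∧
    a ≠ b ∧ a ≠ c ∧ b ≠ c ∧ ¬G.Adj a b ∧ ¬G.Adj a c ∧ ¬G.Adj b c

/-- `s` is an independent set of `G`. -/
def Indep {V : Type} (G : SimpleGraph V) (s : Set V) : Prop :=
  ∀ u ∈ s, ∀ v ∈ s, ¬G.Adj u v

/-- Token sliding step between independent sets. -/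
def TSStep {V : Type} (G : SimpleGraph V) (I J : Set V) : Prop :=
  Indep G I ∧ Indep G J ∧ ∃ u v : V, G.Adj u v ∧ I \ J = {u} ∧ J \ I = {v}

/-- Token jumping step between independent sets. -/
def TJStep {V : Type} (G : SimpleGraph V) (I J : Set V) : Prop :=
  Indep G I ∧ Indep G J ∧ ∃ u v : V, I \ J = {u} ∧ J \ I = {v}

/-- Reachability under token sliding. -/
def TSReach {V : Type} (G : SimpleGraph V) : Set V → Set V → Prop :=
  Relation.ReflTransGen (TSStep G)

/-- Reachability under token jumping. -/
def TJReach {V : Type} (G : SimpleGraph V) : Set V → Set V → Prop :=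
  Relation.ReflTransGen (TJStep G)

/-- The neighbors of `v` inside the set `B`. -/
def nbrsIn {V : Type} (G : SimpleGraph V) (B : Set V) (v : V) : Set V :=
  {u ∈ B | G.Adj v u}

/-- `Nset G B i` is the set `N_i(B)` of vertices outside `B` with exactly `i` neighbors in `B`. -/
def Nset {V : Type} (G : SimpleGraph V) (B : Set V) (i : ℕ) : Set V :=
  {v | v ∉ B ∧ (nbrsIn G B v).ncard = i}

/-- The neighborhood of a set. -/
def Nbhd {V : Type} (G : SimpleGraph V) (S : Set V) : Set V :=
  {w | ∃ u ∈ S, G.Adj w u}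

/-- An `I`-bad cycle: a chordless `I`-alternating cycle `c 0, c 1, …, c (2n-1), c 0`
with `c j ∈ I` exactly for even `j`. -/
def IsBadCycle {V : Type} (G : SimpleGraph V) (I : Set V) (n : ℕ) (c : ZMod (2*n) → V) : Prop :=
  2 ≤ n ∧ Function.Injective c ∧
  (∀ j : ZMod (2*n), G.Adj (c j) (c (j + 1))) ∧
  (∀ i j : ZMod (2*n), G.Adj (c i) (c j) → j = i + 1 ∨ i = j + 1) ∧
  (∀ j : ZMod (2*n), c j ∈ I ↔ Even (ZMod.val j))

/-- The part `A = V(C) ∩ I` of the `I`-bipartition of a bad cycle. -/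
def cycA {V : Type} {n : ℕ} (c : ZMod (2*n) → V) : Set V :=
  c '' {j | Even (ZMod.val j)}

/-- The part `B = V(C) \ I` of the `I`-bipartition of a bad cycle. -/
def cycB {V : Type} {n : ℕ} (c : ZMod (2*n) → V) : Set V :=
  c '' {j | ¬ Even (ZMod.val j)}

/-- The bad cycle `c` is resolvable with respect to `I`. -/
def Resolvable {V : Type} (G : SimpleGraph V) (I : Set V) {n : ℕ} (c : ZMod (2*n) → V) : Prop :=
  ∃ I' : Set V, TSReach G I I' ∧ (G.induce (I' ∪ cycB c)).IsAcyclic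

/-- A vertex is free w.r.t. `I` if it is outside `I` and has at most one neighbor in `I`. -/
def FreeVert {V : Type} (G : SimpleGraph V) (I : Set V) (v : V) : Prop :=
  v ∉ I ∧ (nbrsIn G I v).ncard ≤ 1

/-- An `I`-augmenting path `x 0, x 1, …, x (2k)`: an `I`-alternating chordless path of
length `2k ≥ 2` whose endpoints are free vertices. -/
def IsAugPath {V : Type} (G : SimpleGraph V) (I : Set V) (k : ℕ) (x : Fin (2*k+1) → V) : Prop :=
  1 ≤ k ∧ Function.Injective x ∧
  (∀ j : Fin (2*k), G.Adj (x j.castSucc) (x j.succ)) ∧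
  (∀ i j : Fin (2*k+1), G.Adj (x i) (x j) → i.val + 1 = j.val ∨ j.val + 1 = i.val) ∧
  (∀ j : Fin (2*k+1), x j ∈ I ↔ Odd j.val) ∧
  FreeVert G I (x 0) ∧ FreeVert G I (x (Fin.last (2*k)))

namespace SimpleGraph

variable {V : Type*} {G : SimpleGraph V}

theorem IsAcyclic.exists_neighborSet_subsingleton [Finite V] [Nonempty V] (h : G.IsAcyclic) :
    ∃ v, (G.neighborSet v).Subsingleton := by
  obtain ⟨u, v, p, hp, hmax⟩ := Walk.exists_isPath_forall_isPath_length_le_length G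
  -- A neighbour of `u` off the longest path `p` would extend it.
  have h_eq_snd : ∀ w, G.Adj u w → w = p.snd := fun w hw ↦ by
    refine h.eq_snd_of_adj_start hp hw (by_contra fun hw' ↦ ?_)
    simpa using hmax _ _ _ (hp.cons (h := hw.symm) hw')
  exact ⟨u, fun w hw w' hw' ↦ (h_eq_snd w hw).trans (h_eq_snd w' hw').symm⟩

end SimpleGraph

section TokenJumping

variable {V : Type} {G : SimpleGraph V} {I J : Set V}

theorem TJStep.symm (h : TJStep G I J) : TJStep G J I :=
  let ⟨hI, hJ, u, v, hu, hv⟩ := h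
  ⟨hJ, hI, v, u, hv, hu⟩

theorem TJStep.ne (h : TJStep G I J) : I ≠ J := by
  rintro rfl
  obtain ⟨-, -, u, -, hu, -⟩ := h
  simpa using hu.symm.subset (Set.mem_singleton u)

/-- The token jumping graph; unlike `TJ_k(G)` it is not restricted to sets of a fixed size `k`,
which makes no difference since `TJStep` preserves the size. -/
def tjGraph (G : SimpleGraph V) : SimpleGraph (Set V) where
  Adj := TJStep G
  symm := ⟨fun _ _ ↦ TJStep.symm⟩
  loopless := ⟨fun _ h ↦ h.ne rfl⟩

@[simp]
theorem tjGraph_adj : (tjGraph G).Adj I J ↔ TJStep G I J := Iff.rfl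

theorem SimpleGraph.Walk.exists_tjStep_seq (p : (tjGraph G).Walk I J) :
    ∃ f : ℕ → Set V,
      f 0 = I ∧ f p.length = J ∧ ∀ i < p.length, TJStep G (f i) (f (i + 1)) :=
  ⟨p.getVert, p.getVert_zero, p.getVert_length, fun _ hi ↦ p.adj_getVert_succ hi⟩

theorem isAcyclic_induce_symmDiff (hI : Indep G I) (hJ : Indep G J)
    (hnoeven : ∀ (v : ↑(symmDiff I J)) (w : (G.induce (symmDiff I J)).Walk v v),
      w.IsCycle → ¬ Even w.length) :
    (G.induce (symmDiff I J)).IsAcyclic := by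
  classical
  let c : (G.induce (symmDiff I J)).Coloring Bool :=
    Coloring.mk (fun v ↦ decide ((v : V) ∈ I)) fun {a b} hab hc ↦ by
      have ha := Set.mem_symmDiff.mp a.2
      have hb := Set.mem_symmDiff.mp b.2
      have hab' : G.Adj a b := hab
      simp only [decide_eq_decide] at hc
      rcases ha with ⟨haI, -⟩ | ⟨haJ, haI⟩
      · exact hI a haI b (hc.mp haI) hab'
      · exact hJ a haJ b (hb.resolve_left fun hb' ↦ haI (hc.mpr hb'.1)).1 hab'
  exact fun v w hw ↦ hnoeven v w hw ((c.even_length_iff_congr w).mpr Iff.rfl)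

theorem Indep.tjStep_exchange (hI : Indep G I) {x u : V} (hx : x ∉ I) (hu : u ∈ I)
    (hnbr : ∀ w ∈ I, G.Adj x w → w = u) : TJStep G I (insert x (I \ {u})) := by
  refine ⟨hI, ?_, u, x, ?_, ?_⟩
  · rintro a (rfl | ⟨haI, hau⟩) b (rfl | ⟨hbI, hbu⟩) hab
    · exact hab.ne rfl
    · exact hbu (hnbr b hbI hab)
    · exact hau (hnbr a haI hab.symm)
    · exact hI a haI b hbI hab
  all_goals ext w; simp only [Set.mem_sdiff, Set.mem_insert_iff, Set.mem_singleton_iff]; grind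

theorem exists_tjStep_of_leaf (hI : Indep G I) (hJ : Indep G J) {n : ℕ}
    (hIJ : (I \ J).ncard = n + 1) (hJI : (J \ I).ncard = n + 1) {x : V} (hx : x ∈ J \ I)
    (hleaf : ∀ y ∈ symmDiff I J, ∀ z ∈ symmDiff I J, G.Adj x y → G.Adj x z → y = z) :
    ∃ I', TJStep G I I' ∧ Indep G I' ∧ (I' \ J).ncard = n ∧ (J \ I').ncard = n ∧
      symmDiff I' J ⊆ symmDiff I J := by
  -- Neighbours of `x` in `I` lie outside `J`, hence in `G[I △ J]`, where `x` has at most one.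
  obtain ⟨u, hu, hnbr⟩ : ∃ u ∈ I \ J, ∀ w ∈ I, G.Adj x w → w = u := by
    have hnotJ : ∀ w, G.Adj x w → w ∉ J := fun w hxw hw ↦ hJ x hx.1 w hw hxw
    by_cases h : ∃ u ∈ I, G.Adj x u
    · obtain ⟨u, huI, hxu⟩ := h
      exact ⟨u, ⟨huI, hnotJ u hxu⟩, fun w hw hxw ↦
        hleaf w (Or.inl ⟨hw, hnotJ w hxw⟩) u (Or.inl ⟨huI, hnotJ u hxu⟩) hxw hxu⟩
    · obtain ⟨u, hu⟩ := Set.nonempty_of_ncard_ne_zero (s := I \ J) (by omega)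
      exact ⟨u, hu, fun w hw hxw ↦ absurd ⟨w, hw, hxw⟩ h⟩
  have hstep := hI.tjStep_exchange hx.2 hu.1 hnbr
  have hI'J : insert x (I \ {u}) \ J = (I \ J) \ {u} := by
    ext w; simp only [Set.mem_sdiff, Set.mem_insert_iff, Set.mem_singleton_iff]; grind
  have hJI' : J \ insert x (I \ {u}) = (J \ I) \ {x} := by
    ext w; simp only [Set.mem_sdiff, Set.mem_insert_iff, Set.mem_singleton_iff]; grind
  refine ⟨_, hstep, hstep.2.1, ?_, ?_, fun w ↦ ?_⟩
  · rw [hI'J, Set.ncard_sdiff_singleton_of_mem hu, hIJ]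
    rfl
  · rw [hJI', Set.ncard_sdiff_singleton_of_mem hx, hJI]
    rfl
  · simp only [Set.mem_symmDiff, Set.mem_sdiff, Set.mem_insert_iff, Set.mem_singleton_iff]
    grind

theorem exists_walk_tjGraph_of_isAcyclic [Finite V] {n : ℕ} (hI : Indep G I) (hJ : Indep G J)
    (hIJ : (I \ J).ncard = n) (hJI : (J \ I).ncard = n)
    (hac : (G.induce (symmDiff I J)).IsAcyclic) :
    ∃ p : (tjGraph G).Walk I J, p.length = n := by
  induction n generalizing I J with
  | zero =>
    obtain rfl : I = J := (Set.sdiff_eq_empty.mp ((Set.ncard_eq_zero).mp hIJ)).antisymm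
      (Set.sdiff_eq_empty.mp ((Set.ncard_eq_zero).mp hJI))
    exact ⟨Walk.nil, rfl⟩
  | succ n ih =>
    have : Nonempty ↥(symmDiff I J) := by
      obtain ⟨u, hu⟩ := Set.nonempty_of_ncard_ne_zero (s := I \ J) (by omega)
      exact ⟨u, Or.inl hu⟩
    obtain ⟨⟨x, hxIJ⟩, hdeg⟩ := hac.exists_neighborSet_subsingleton
    have hleaf : ∀ y ∈ symmDiff I J, ∀ z ∈ symmDiff I J, G.Adj x y → G.Adj x z → y = z :=
      fun y hy z hz hxy hxz ↦
        congrArg Subtype.val (hdeg (x := ⟨y, hy⟩) (y := ⟨z, hz⟩) hxy hxz)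
    rcases Set.mem_symmDiff.mp hxIJ with hx | hx
    · rw [symmDiff_comm] at hleaf
      obtain ⟨J', hstep, hJ', hJ'I, hIJ', hsub⟩ := exists_tjStep_of_leaf hJ hI hJI hIJ hx hleaf
      obtain ⟨p, hp⟩ := ih hI hJ' hIJ' hJ'I <|
        hac.embedding (G.induceHomOfLE (symmDiff_comm J' I ▸ symmDiff_comm J I ▸ hsub))
      exact ⟨p.concat (tjGraph_adj.2 hstep.symm), by simp [hp]⟩
    · obtain ⟨I', hstep, hI', hI'J, hJI', hsub⟩ := exists_tjStep_of_leaf hI hJ hIJ hJI hx hleaf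
      obtain ⟨p, hp⟩ := ih hI' hJ hI'J hJI' (hac.embedding (G.induceHomOfLE hsub))
      exact ⟨p.cons (tjGraph_adj.2 hstep), by simp [hp]⟩

end TokenJumping

theorem stmt_7_general {V : Type} [Fintype V] (G : SimpleGraph V)
    (I J : Set V) (hI : Indep G I) (hJ : Indep G J) (hcard : I.ncard = J.ncard)
    (hnoeven : ∀ (v : ↑(symmDiff I J)) (w : (G.induce (symmDiff I J)).Walk v v),
      w.IsCycle → ¬ Even w.length) :
    ∃ f : ℕ → Set V, f 0 = I ∧ f ((I \ J).ncard) = J ∧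
      ∀ i < (I \ J).ncard, TJStep G (f i) (f (i+1)) := by
  obtain ⟨p, hp⟩ := exists_walk_tjGraph_of_isAcyclic hI hJ rfl
    ((Set.ncard_eq_ncard_iff_ncard_sdiff_eq_ncard_sdiff (s := J) (t := I)).mp hcard.symm)
    (isAcyclic_induce_symmDiff hI hJ hnoeven)
  exact hp ▸ p.exists_tjStep_seq

/-- If `G[I △ J]` contains no even cycles, then there is a TJ-sequence from `I` to `J`
of length exactly `|I \ J|`. -/
theorem stmt_7 {V : Type} [Fintype V] [DecidableEq V] (G : SimpleGraph V)
    (I J : Set V) (hI : Indep G I) (hJ : Indep G J) (hcard : I.ncard = J.ncard)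
    (hnoeven : ∀ (v : ↑(symmDiff I J)) (w : (G.induce (symmDiff I J)).Walk v v),
      w.IsCycle → ¬ Even w.length) :
    ∃ f : ℕ → Set V, f 0 = I ∧ f ((I \ J).ncard) = J ∧
      ∀ i < (I \ J).ncard, TJStep G (f i) (f (i+1)) :=
  stmt_7_general G I J hI hJ hcard hnoeven
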